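/- Let ν be a positive integer and, for k = 1,…,ν, write N_k = n_k + n_{k+1} + … + n_ν. For every nonnegative integer M and every complex number q with 0<|q|<1: Σ_{n₁,…,n_ν ≥ 0} q^{3(N₁²+N₂²+…+N_ν²)} (−q;q²)_{3n_ν} / ( (q⁶;q⁶)_{M−N₁} (q⁶;q⁶)_{n₁} (q⁶;q⁶)_{n₂} ⋯ (q⁶;q⁶)_{n_{ν−1}} (q⁶;q⁶)_{2n_ν} ) = ( (−q³;q⁶)_M / (q⁶;q⁶)_{2M} ) · Σ_{j=−M}^{M} q^{3(ν+1)j² + 2j} [2M choose M+j]_{q⁶}, where the convention 1/(q;q)_k := 0 for k < 0 makes the left-hand sum finite (only terms with N₁ ≤ M contribute). -/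

import Mathlib

open Finset

noncomputable section

/-- The finite q-Pochhammer symbol `(a;q)_n`. -/
def qPoch (a q : ℂ) (n : ℕ) : ℂ := ∏ k ∈ Finset.range n, (1 - a * q ^ k)

/-- The infinite q-Pochhammer symbol `(a;q)_∞`. -/
def qPochInf (a q : ℂ) : ℂ := ∏' k : ℕ, (1 - a * q ^ k)

/-- The Gaussian binomial coefficient `[N choose k]_q`, zero unless `0 ≤ k ≤ N`. -/
def qBinom (q : ℂ) (N k : ℤ) : ℂ :=
  if 0 ≤ k ∧ k ≤ N then qPoch q q N.toNat / (qPoch q q k.toNat * qPoch q q (N - k).toNat)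
  else 0

/-- `1/(a;q)_k`, with the convention that it is `0` for `k < 0`. -/
def invPoch (a q : ℂ) (k : ℤ) : ℂ := if 0 ≤ k then (qPoch a q k.toNat)⁻¹ else 0

/-- Warnaar's refined q-trinomial coefficient `T(L, M; a, b; q)`, where `z` is a fixed
square root of `q`, so that `q^(n²/2) = z^(n²)`. -/
def Twar (z q : ℂ) (L M a b : ℤ) : ℂ :=
  ∑' n : ℕ, if (L - a - (n : ℤ)) % 2 = 0 then
    z ^ (n ^ 2) * qBinom q M (n : ℤ) * qBinom q (M + b + (L - a - (n : ℤ)) / 2) (M + b) *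
      qBinom q (M - b + (L + a - (n : ℤ)) / 2) (M - b)
  else 0

/-- Warnaar's refined q-trinomial coefficient `S(L, M; a, b; q)`. -/
def Swar (q : ℂ) (L M a b : ℤ) : ℂ :=
  ∑' n : ℕ, q ^ ((n : ℤ) * ((n : ℤ) + a)) * qBinom q (M + L - a - 2 * (n : ℤ)) M *
    qBinom q (M - a + b) (n : ℤ) * qBinom q (M + a - b) ((n : ℤ) + a)

/-- The Andrews–Baxter q-trinomial coefficient `(L, b; a; q)₂`. -/
def roundTri (q : ℂ) (L : ℕ) (b a : ℤ) : ℂ :=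
  ∑' n : ℕ, q ^ ((n : ℤ) * ((n : ℤ) + b)) * qPoch q q L * invPoch q q (n : ℤ) *
    invPoch q q ((n : ℤ) + a) * invPoch q q ((L : ℤ) - 2 * (n : ℤ) - a)

/-- The Andrews–Baxter q-trinomial `T₀(L; a; q) = q^((L²-a²)/2) (L,a;a;1/q)₂`, where `z`
is a fixed square root of `q`, so that `q^((L²-a²)/2) = z^(L²-a²)`. -/
def T0 (z q : ℂ) (L : ℕ) (a : ℤ) : ℂ := z ^ ((L : ℤ) ^ 2 - a ^ 2) * roundTri q⁻¹ L a a

/-- The partial sum `N_k = n_k + n_(k+1) + ... + n_ν` (0-indexed). -/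
def Nsum {ν : ℕ} (n : Fin ν → ℕ) (k : Fin ν) : ℕ := ∑ l : Fin ν, if k ≤ l then n l else 0

end

/-!
Write `Q = q⁶` and `s = q³`. Since `(-q;q²)_{3n} = (-q;Q)_n (-q³;Q)_n (-q⁵;Q)_n`, a finite
form of the Jacobi triple product says that `α_j = q^(3j²+2j)` and
`β_n = (-q;Q)_n (-q⁵;Q)_n / (Q;Q)_{2n}` form a Bailey pair relative to `1`, in the symmetric
normalisation `β_n = ∑_{|j| ≤ n} α_j / ((Q;Q)_{n-j} (Q;Q)_{n+j})`.
Fixing `N₁ = m`, the `ν`-fold sum is `∑_m s^(m²) / (Q;Q)_{M-m}` times the `(ν-1)`-fold sum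
with `M` replaced by `m`, where the `0`-fold sum is `(-s;Q)_m β_m`. Each such step is Bailey's
lemma with `ρ₁ = -s`, `ρ₂ → ∞`: it keeps the shape `(-s;Q)_M β_M` and multiplies `α_j` by
`s^(j²) = q^(3j²)`; its closed form is a `q`-Chu–Vandermonde sum. After `ν` steps
`α_j = q^(3(ν+1)j² + 2j)`, and `1 / ((Q;Q)_{M-j} (Q;Q)_{M+j}) = [2M choose M+j]_Q / (Q;Q)_{2M}`
gives the right-hand side.
-/

open Finset

section QPochhammer

variable {a Q : ℂ}

@[simp]
lemma qPoch_zero (a Q : ℂ) : qPoch a Q 0 = 1 := by simp [qPoch]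

lemma qPoch_succ (a Q : ℂ) (n : ℕ) : qPoch a Q (n + 1) = qPoch a Q n * (1 - a * Q ^ n) :=
  prod_range_succ _ _

lemma qPoch_add (a Q : ℂ) (m n : ℕ) :
    qPoch a Q (m + n) = qPoch a Q m * qPoch (a * Q ^ m) Q n := by
  simp only [qPoch, prod_range_add, pow_add, mul_assoc]

lemma qPoch_succ' (a Q : ℂ) (n : ℕ) : qPoch a Q (n + 1) = (1 - a) * qPoch (a * Q) Q n := by
  rw [add_comm, qPoch_add]
  simp [qPoch]

@[simp]
lemma qPoch_zero_left (Q : ℂ) (n : ℕ) : qPoch 0 Q n = 1 := by simp [qPoch]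

lemma qPoch_ne_zero_of_norm_lt_one (ha : ‖a‖ < 1) (hQ : ‖Q‖ ≤ 1) (n : ℕ) :
    qPoch a Q n ≠ 0 := by
  refine prod_ne_zero_iff.2 fun k _ h => ?_
  have hlt : ‖a * Q ^ k‖ < 1 := by
    rw [norm_mul, norm_pow]
    exact (mul_le_of_le_one_right (norm_nonneg a) (pow_le_one₀ (norm_nonneg Q) hQ)).trans_lt ha
  rw [← sub_eq_zero.1 h, norm_one] at hlt
  exact lt_irrefl _ hlt

lemma qPoch_three_mul (a Q : ℂ) (n : ℕ) :
    qPoch a Q (3 * n) =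
      qPoch a (Q ^ 3) n * qPoch (a * Q) (Q ^ 3) n * qPoch (a * Q ^ 2) (Q ^ 3) n := by
  induction n with
  | zero => simp
  | succ n ih =>
    rw [show 3 * (n + 1) = 3 * n + 1 + 1 + 1 by ring, qPoch_succ, qPoch_succ, qPoch_succ, ih,
      qPoch_succ, qPoch_succ, qPoch_succ]
    ring

lemma qPoch_reflect (hQ : Q ≠ 0) {z : ℂ} (hz : z ≠ 0) (n : ℕ) :
    Q ^ (n + 1).choose 2 * qPoch (-(z / Q ^ n)) Q n = z ^ n * qPoch (-(Q / z)) Q n := by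
  induction n with
  | zero => simp
  | succ n ih =>
    have hshift : -(z / Q ^ (n + 1)) * Q = -(z / Q ^ n) := by
      field_simp
      ring
    rw [qPoch_succ', hshift, Nat.choose_succ_succ' (n + 1), Nat.choose_one_right, pow_add,
      qPoch_succ]
    have hfactor : Q ^ (n + 1) * (1 - -(z / Q ^ (n + 1))) = z * (1 - -(Q / z) * Q ^ n) := by
      field_simp
      ring
    calc _ = Q ^ (n + 1) * (1 - -(z / Q ^ (n + 1))) *
          (Q ^ (n + 1).choose 2 * qPoch (-(z / Q ^ n)) Q n) := by ring
      _ = _ := by rw [hfactor, ih]; ring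

lemma invPoch_natCast (a Q : ℂ) (n : ℕ) : invPoch a Q n = (qPoch a Q n)⁻¹ := by
  simp [invPoch]

lemma invPoch_of_neg (a Q : ℂ) {k : ℤ} (hk : k < 0) : invPoch a Q k = 0 := by
  simp [invPoch, hk.not_ge]

end QPochhammer

lemma two_mul_choose_two_add_self (n : ℕ) : 2 * n.choose 2 + n = n ^ 2 := by
  induction n with
  | zero => rfl
  | succ n ih =>
    rw [Nat.choose_succ_succ', Nat.choose_one_right]
    nlinarith

section GaussBinom

variable {Q : ℂ}

noncomputable def gaussBinom (Q : ℂ) (N k : ℕ) : ℂ :=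
  if k ≤ N then qPoch Q Q N / (qPoch Q Q k * qPoch Q Q (N - k)) else 0

lemma gaussBinom_of_lt {N k : ℕ} (h : N < k) : gaussBinom Q N k = 0 :=
  if_neg h.not_ge

lemma gaussBinom_zero_right (hQ : ∀ n, qPoch Q Q n ≠ 0) (N : ℕ) : gaussBinom Q N 0 = 1 := by
  simp [gaussBinom, hQ N]

lemma gaussBinom_self (hQ : ∀ n, qPoch Q Q n ≠ 0) (N : ℕ) : gaussBinom Q N N = 1 := by
  simp [gaussBinom, hQ N]

lemma gaussBinom_div_qPoch (hQ : ∀ n, qPoch Q Q n ≠ 0) {N k : ℕ} (h : k ≤ N) :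
    gaussBinom Q N k / qPoch Q Q N = (qPoch Q Q k)⁻¹ * (qPoch Q Q (N - k))⁻¹ := by
  rw [gaussBinom, if_pos h]
  field_simp [hQ N, hQ k, hQ (N - k)]

lemma gaussBinom_succ_succ (hQ : ∀ n, qPoch Q Q n ≠ 0) (N k : ℕ) :
    gaussBinom Q (N + 1) (k + 1) = gaussBinom Q N (k + 1) + Q ^ (N - k) * gaussBinom Q N k := by
  rcases lt_trichotomy k N with hk | rfl | hk
  · obtain ⟨d, rfl⟩ : ∃ d, N = k + d + 1 := ⟨N - k - 1, by omega⟩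
    have hlast : ∀ m, 1 - Q * Q ^ m ≠ 0 := fun m h =>
      hQ (m + 1) (by rw [qPoch_succ, h, mul_zero])
    simp only [gaussBinom, if_pos (show k + 1 ≤ k + d + 1 + 1 by omega),
      if_pos (show k + 1 ≤ k + d + 1 by omega), if_pos (show k ≤ k + d + 1 by omega),
      show k + d + 1 + 1 - (k + 1) = d + 1 by omega, show k + d + 1 - (k + 1) = d by omega,
      show k + d + 1 - k = d + 1 by omega, qPoch_succ Q Q (k + d + 1), qPoch_succ Q Q k,
      qPoch_succ Q Q d]
    field_simp [hQ k, hQ d, hQ (k + d + 1), hlast k, hlast d]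
    ring
  · rw [gaussBinom_self hQ, gaussBinom_of_lt (Nat.lt_succ_self k), gaussBinom_self hQ]
    simp
  · rw [gaussBinom_of_lt (by omega), gaussBinom_of_lt (by omega), gaussBinom_of_lt hk]
    simp

/-- A form of the `q`-Chu–Vandermonde sum. -/
theorem sum_gaussBinom_mul_qPoch_mul_qPoch (hQ : ∀ n, qPoch Q Q n ≠ 0) (B : ℂ) (K : ℕ) :
    ∀ x : ℂ, ∑ n ∈ range (K + 1), (-B) ^ n * Q ^ n.choose 2 * qPoch x Q n *
      qPoch (x * B * Q ^ n) Q (K - n) * gaussBinom Q K n = qPoch B Q K := by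
  induction K with
  | zero => intro x; simp [gaussBinom_self hQ]
  | succ K ih =>
    intro x
    have hfirst : ∑ n ∈ range (K + 2), (-B) ^ n * Q ^ n.choose 2 * qPoch x Q n *
        qPoch (x * B * Q ^ n) Q (K + 1 - n) * gaussBinom Q K n =
        (1 - x * B * Q ^ K) * qPoch B Q K := by
      rw [sum_range_succ, gaussBinom_of_lt (Nat.lt_succ_self K), mul_zero, add_zero, ← ih x,
        mul_sum]
      refine sum_congr rfl fun n hn => ?_
      have hn : n ≤ K := Nat.lt_succ_iff.1 (mem_range.1 hn)
      have hpow : Q ^ n * Q ^ (K - n) = Q ^ K := by rw [← pow_add, Nat.add_sub_cancel' hn]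
      rw [show K + 1 - n = K - n + 1 by omega, qPoch_succ]
      linear_combination (-B) ^ n * Q ^ n.choose 2 * qPoch x Q n *
        qPoch (x * B * Q ^ n) Q (K - n) * gaussBinom Q K n * (-(x * B)) * hpow
    have hsecond : ∑ n ∈ range (K + 1), (-B) ^ (n + 1) * Q ^ (n + 1).choose 2 *
        qPoch x Q (n + 1) * qPoch (x * B * Q ^ (n + 1)) Q (K + 1 - (n + 1)) *
        (Q ^ (K - n) * gaussBinom Q K n) = -B * (1 - x) * Q ^ K * qPoch B Q K := by
      rw [← ih (x * Q), mul_sum]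
      refine sum_congr rfl fun n hn => ?_
      have hn : n ≤ K := Nat.lt_succ_iff.1 (mem_range.1 hn)
      have hpow : Q ^ n * Q ^ (K - n) = Q ^ K := by rw [← pow_add, Nat.add_sub_cancel' hn]
      rw [qPoch_succ', Nat.choose_succ_succ', Nat.choose_one_right, Nat.add_sub_add_right,
        show x * B * Q ^ (n + 1) = x * Q * B * Q ^ n by ring]
      linear_combination (-B) ^ n * (-B) * Q ^ n.choose 2 * (1 - x) * qPoch (x * Q) Q n *
        qPoch (x * Q * B * Q ^ n) Q (K - n) * gaussBinom Q K n * hpow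
    -- Pascal's rule splits the sum into the two sums above.
    have hzero : gaussBinom Q (K + 1) 0 = gaussBinom Q K 0 := by
      rw [gaussBinom_zero_right hQ, gaussBinom_zero_right hQ]
    rw [sum_range_succ', sum_congr rfl fun n _ => by rw [gaussBinom_succ_succ hQ, mul_add],
      sum_add_distrib, hsecond, hzero, add_right_comm,
      ← sum_range_succ' (fun n => (-B) ^ n * Q ^ n.choose 2 * qPoch x Q n *
        qPoch (x * B * Q ^ n) Q (K + 1 - n) * gaussBinom Q K n), hfirst, qPoch_succ]
    ring

theorem qPoch_neg_eq_sum_gaussBinom (hQ : ∀ n, qPoch Q Q n ≠ 0) (z : ℂ) (N : ℕ) :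
    qPoch (-z) Q N = ∑ k ∈ range (N + 1), gaussBinom Q N k * Q ^ k.choose 2 * z ^ k := by
  rw [← sum_gaussBinom_mul_qPoch_mul_qPoch hQ (-z) N 0]
  refine sum_congr rfl fun k _ => ?_
  simp only [neg_neg, qPoch_zero_left, zero_mul, mul_one]
  ring

end GaussBinom

section Bailey

variable {s Q : ℂ}

noncomputable def baileyBeta (Q : ℂ) (α : ℤ → ℂ) (m : ℕ) : ℂ :=
  ∑ j ∈ Icc (-(m : ℤ)) m, α j * (invPoch Q Q (m - j) * invPoch Q Q (m + j))

lemma pow_add_sq_eq (hsQ : s ^ 2 = Q) (j n : ℕ) :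
    s ^ ((j + n) ^ 2) = s ^ (j ^ 2) * (-(-s * Q ^ j)) ^ n * Q ^ n.choose 2 := by
  subst hsQ
  simp only [neg_mul, neg_neg, mul_pow, ← pow_mul, ← pow_add]
  congr 1
  linarith [two_mul_choose_two_add_self n]

lemma sum_bailey_kernel_of_nat (hsQ : s ^ 2 = Q) (hQ : ∀ n, qPoch Q Q n ≠ 0) {j M : ℕ}
    (hj : j ≤ M) :
    ∑ m ∈ range (M + 1), s ^ (m ^ 2) * qPoch (-s) Q m * invPoch Q Q (M - m) *
      (invPoch Q Q (m - j) * invPoch Q Q (m + j)) =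
    s ^ (j ^ 2) * qPoch (-s) Q M * (invPoch Q Q (M - j) * invPoch Q Q (M + j)) := by
  obtain ⟨K, rfl⟩ := Nat.exists_eq_add_of_le hj
  have hlow : ∑ m ∈ range j, s ^ (m ^ 2) * qPoch (-s) Q m * invPoch Q Q ((j + K : ℕ) - m) *
      (invPoch Q Q (m - j) * invPoch Q Q (m + j)) = 0 :=
    sum_eq_zero fun m hm => by
      rw [invPoch_of_neg Q Q (show (m : ℤ) - j < 0 by simp only [mem_range] at hm; omega)]
      ring
  -- With `m = j + n`, this is the `q`-Chu–Vandermonde sum at `x = B = -s Q^j`.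
  set B := -s * Q ^ j with hB
  have hBB : B * B = Q * Q ^ (2 * j) := by rw [hB, ← hsQ]; ring
  rw [show j + K + 1 = j + (K + 1) by ring, sum_range_add, hlow, zero_add, qPoch_add (-s) Q j K,
    ← sum_gaussBinom_mul_qPoch_mul_qPoch hQ B K B, mul_sum, mul_sum, sum_mul]
  refine sum_congr rfl fun n hn => ?_
  have hn : n ≤ K := Nat.lt_succ_iff.1 (mem_range.1 hn)
  have hQ2 : qPoch Q Q (2 * j + K) =
      qPoch Q Q (2 * j + n) * qPoch (Q * Q ^ (2 * j + n)) Q (K - n) := by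
    rw [← qPoch_add, show 2 * j + n + (K - n) = 2 * j + K by omega]
  push_cast
  rw [show (j : ℤ) + K - (j + n) = (K - n : ℕ) by push_cast [hn]; ring,
    show (j : ℤ) + n - j = n by ring,
    show (j : ℤ) + n + j = (2 * j + n : ℕ) by push_cast; ring,
    show (j : ℤ) + K - j = K by ring,
    show (j : ℤ) + K + j = (2 * j + K : ℕ) by push_cast; ring]
  simp only [invPoch_natCast]
  rw [qPoch_add (-s) Q j n, pow_add_sq_eq hsQ, gaussBinom, if_pos hn, hQ2,
    show B * B * Q ^ n = Q * Q ^ (2 * j + n) by rw [hBB]; ring]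
  have hrest : qPoch (Q * Q ^ (2 * j + n)) Q (K - n) ≠ 0 := right_ne_zero_of_mul (hQ2 ▸ hQ _)
  rw [← hB]
  field_simp [hQ K, hQ n, hQ (K - n), hQ (2 * j + n), hrest]

lemma sum_bailey_kernel (hsQ : s ^ 2 = Q) (hQ : ∀ n, qPoch Q Q n ≠ 0) {M : ℕ} {j : ℤ}
    (hj : j ∈ Icc (-(M : ℤ)) M) :
    ∑ m ∈ range (M + 1), s ^ (m ^ 2) * qPoch (-s) Q m * invPoch Q Q (M - m) *
      (invPoch Q Q (m - j) * invPoch Q Q (m + j)) =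
    s ^ (j ^ 2) * qPoch (-s) Q M * (invPoch Q Q (M - j) * invPoch Q Q (M + j)) := by
  rw [mem_Icc] at hj
  obtain ⟨k, rfl | rfl⟩ := Int.eq_nat_or_neg j
  · rw [← Nat.cast_pow, zpow_natCast]
    exact sum_bailey_kernel_of_nat hsQ hQ (by omega)
  · simp only [neg_sq, sub_neg_eq_add, ← sub_eq_add_neg, ← Nat.cast_pow, zpow_natCast]
    simp only [mul_comm (invPoch Q Q (_ + _))]
    exact sum_bailey_kernel_of_nat hsQ hQ (by omega)

/-- Bailey's lemma (relative to `a = 1`, base `Q = s²`) with `ρ₁ = -s` and `ρ₂ → ∞`. -/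
theorem sum_bailey_step (hsQ : s ^ 2 = Q) (hQ : ∀ n, qPoch Q Q n ≠ 0) (α : ℤ → ℂ)
    (M : ℕ) :
    ∑ m ∈ range (M + 1),
        s ^ (m ^ 2) * qPoch (-s) Q m * invPoch Q Q (M - m) * baileyBeta Q α m =
      qPoch (-s) Q M * baileyBeta Q (fun j => s ^ (j ^ 2) * α j) M := by
  have hwiden : ∀ m ∈ range (M + 1), baileyBeta Q α m =
      ∑ j ∈ Icc (-(M : ℤ)) M, α j * (invPoch Q Q (m - j) * invPoch Q Q (m + j)) := by
    intro m hm
    have hm : m ≤ M := Nat.lt_succ_iff.1 (mem_range.1 hm)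
    refine sum_subset (Icc_subset_Icc (by omega) (by omega)) fun j _ hjm => ?_
    rw [mem_Icc, not_and_or, not_le, not_le] at hjm
    rcases hjm with hj | hj
    · rw [invPoch_of_neg Q Q (show (m : ℤ) + j < 0 by omega)]
      ring
    · rw [invPoch_of_neg Q Q (show (m : ℤ) - j < 0 by omega)]
      ring
  rw [sum_congr rfl fun m hm => by rw [hwiden m hm, mul_sum], sum_comm, baileyBeta, mul_sum]
  refine sum_congr rfl fun j hj => ?_
  calc _ = α j * ∑ m ∈ range (M + 1), s ^ (m ^ 2) * qPoch (-s) Q m * invPoch Q Q (M - m) *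
          (invPoch Q Q (m - j) * invPoch Q Q (m + j)) := by
        rw [mul_sum]
        exact sum_congr rfl fun m _ => by ring
    _ = _ := by
        rw [sum_bailey_kernel hsQ hQ hj]
        ring

lemma baileyBeta_eq_sum_qBinom (hQ : ∀ n, qPoch Q Q n ≠ 0) (α : ℤ → ℂ) (M : ℕ) :
    baileyBeta Q α M =
      (qPoch Q Q (2 * M))⁻¹ * ∑ j ∈ Icc (-(M : ℤ)) M, α j * qBinom Q (2 * M) (M + j) := by
  rw [baileyBeta, mul_sum]
  refine sum_congr rfl fun j hj => ?_
  rw [mem_Icc] at hj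
  rw [qBinom, if_pos (by omega), show (2 * M : ℤ) - (M + j) = M - j by ring,
    show (2 * (M : ℤ)).toNat = 2 * M by omega, invPoch, invPoch, if_pos (by omega),
    if_pos (by omega)]
  field_simp [hQ]

end Bailey

section Jacobi

variable {s Q z : ℂ}

lemma inv_pow_mul_pow_choose_two_eq_zpow (hsQ : s ^ 2 = Q) (hs : s ≠ 0) (hz : z ≠ 0) (n i : ℕ) :
    (z ^ n)⁻¹ * Q ^ (n + 1).choose 2 * (Q ^ i.choose 2 * (z / Q ^ n) ^ i) =
      s ^ (((n : ℤ) - i) * ((n : ℤ) - i + 1)) * z ^ (-((n : ℤ) - i)) := by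
  subst hsQ
  have hexp : ((2 * (n + 1).choose 2 + 2 * i.choose 2 : ℕ) : ℤ) - (2 * n * i : ℕ) =
      ((n : ℤ) - i) * ((n : ℤ) - i + 1) := by
    have h1 := two_mul_choose_two_add_self (n + 1)
    have h2 := two_mul_choose_two_add_self i
    push_cast
    zify at h1 h2
    linear_combination h1 + h2
  rw [← hexp, zpow_sub₀ hs, neg_sub, zpow_sub₀ hz, zpow_natCast, zpow_natCast, zpow_natCast,
    zpow_natCast, pow_add, pow_mul, pow_mul, pow_mul, pow_mul]
  field_simp
  rw [← mul_pow, div_mul_cancel₀ _ (pow_ne_zero _ (pow_ne_zero _ hs))]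

/-- A finite form of the Jacobi triple product, read as a Bailey pair relative to `1`. -/
theorem qPoch_mul_qPoch_div_eq_baileyBeta (hsQ : s ^ 2 = Q) (hs : s ≠ 0)
    (hQ : ∀ n, qPoch Q Q n ≠ 0) (hz : z ≠ 0) (n : ℕ) :
    qPoch (-z) Q n * qPoch (-(Q / z)) Q n / qPoch Q Q (2 * n) =
      baileyBeta Q (fun k => s ^ (k * (k + 1)) * z ^ (-k)) n := by
  have hQ0 : Q ≠ 0 := hsQ ▸ pow_ne_zero 2 hs
  have hdouble : qPoch (-z) Q n * qPoch (-(Q / z)) Q n =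
      (z ^ n)⁻¹ * Q ^ (n + 1).choose 2 * qPoch (-(z / Q ^ n)) Q (2 * n) := by
    have hreflect := qPoch_reflect hQ0 hz n
    rw [two_mul, qPoch_add, show -(z / Q ^ n) * Q ^ n = -z by field_simp]
    field_simp
    linear_combination -qPoch (-z) Q n * hreflect
  rw [hdouble, qPoch_neg_eq_sum_gaussBinom hQ, mul_sum, sum_div, baileyBeta]
  refine sum_nbij' (fun i => (n : ℤ) - i) (fun k => (n - k).toNat) ?_ ?_ ?_ ?_ ?_
  · intro i hi
    simp only [mem_range, mem_Icc] at hi ⊢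
    omega
  · intro k hk
    simp only [mem_range, mem_Icc] at hk ⊢
    omega
  · intro i _
    omega
  · intro k hk
    rw [mem_Icc] at hk
    omega
  · intro i hi
    have hi : i ≤ 2 * n := Nat.lt_succ_iff.1 (mem_range.1 hi)
    rw [show (n : ℤ) - (n - i) = i by ring, show (n : ℤ) + (n - i) = (2 * n - i : ℕ) by omega,
      invPoch_natCast, invPoch_natCast, ← gaussBinom_div_qPoch hQ hi,
      ← inv_pow_mul_pow_choose_two_eq_zpow hsQ hs hz]
    ring

end Jacobi

lemma tsum_fst_add_sum_snd {α ι : Type*} [AddCommMonoid α] [TopologicalSpace α] [Fintype ι]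
    {G : ℕ × (ι → ℕ) → α} (hG : ∀ m t, m < ∑ l, t l → G (m, t) = 0) :
    ∑' p : ℕ × (ι → ℕ), G (p.1 + ∑ l, p.2 l, p.2) = ∑' p, G p := by
  refine Function.Injective.tsum_eq (fun p p' h => ?_) fun p hp => ?_
  · simp only [Prod.mk.injEq] at h
    exact Prod.ext (by rw [h.2] at h; omega) h.2
  · have ht : ∑ l, p.2 l ≤ p.1 := not_lt.1 fun h => hp (hG p.1 p.2 h)
    exact ⟨(p.1 - ∑ l, p.2 l, p.2), Prod.ext (by simp only; omega) rfl⟩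

section MultiSum

variable {q : ℂ}

-- The summand of the left-hand side, with `ν = d + 1`.
noncomputable def multiSumTerm (q : ℂ) (M : ℕ) {d : ℕ} (n : Fin (d + 1) → ℕ) : ℂ :=
  q ^ (3 * ∑ k, Nsum n k ^ 2) * qPoch (-q) (q ^ 2) (3 * n (Fin.last d)) *
    invPoch (q ^ 6) (q ^ 6) ((M : ℤ) - (Nsum n 0 : ℤ)) *
    (∏ k : Fin (d + 1), if (k : ℕ) < d then invPoch (q ^ 6) (q ^ 6) (n k : ℤ) else 1) *
    invPoch (q ^ 6) (q ^ 6) (2 * (n (Fin.last d) : ℤ))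

noncomputable def multiSum (q : ℂ) (d M : ℕ) : ℂ :=
  ∑' n : Fin (d + 1) → ℕ, multiSumTerm q M n

lemma Nsum_zero {d : ℕ} (n : Fin (d + 1) → ℕ) : Nsum n 0 = ∑ l, n l :=
  sum_congr rfl fun l _ => if_pos (Fin.zero_le l)

lemma Nsum_cons_succ {d : ℕ} (a : ℕ) (t : Fin (d + 1) → ℕ) (k : Fin (d + 1)) :
    Nsum (Fin.cons a t : Fin (d + 2) → ℕ) k.succ = Nsum t k := by
  simp [Nsum, Fin.sum_univ_succ, Fin.succ_le_succ_iff]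

lemma multiSumTerm_eq_zero_of_lt {M d : ℕ} {n : Fin (d + 1) → ℕ} (h : M < ∑ l, n l) :
    multiSumTerm q M n = 0 := by
  rw [multiSumTerm, Nsum_zero, invPoch_of_neg _ _ (by omega)]
  ring

lemma multiSumTerm_eq_zero_of_notMem {M d : ℕ} {n : Fin (d + 1) → ℕ}
    (h : n ∉ Fintype.piFinset fun _ => range (M + 1)) : multiSumTerm q M n = 0 := by
  simp only [Fintype.mem_piFinset, mem_range, not_forall, not_lt] at h
  obtain ⟨k, hk⟩ := h
  exact multiSumTerm_eq_zero_of_lt (hk.trans_lt' (by omega) |>.trans_le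
    (single_le_sum (fun _ _ => Nat.zero_le _) (mem_univ k)))

lemma multiSumTerm_cons (q : ℂ) (M : ℕ) {d : ℕ} (a : ℕ) (t : Fin (d + 1) → ℕ) :
    multiSumTerm q M (Fin.cons a t : Fin (d + 2) → ℕ) =
      q ^ (3 * (a + ∑ l, t l) ^ 2) *
        invPoch (q ^ 6) (q ^ 6) ((M : ℤ) - (a + ∑ l, t l : ℕ)) *
        multiSumTerm q (a + ∑ l, t l) t := by
  have hsq : ∑ k : Fin (d + 2), Nsum (Fin.cons a t : Fin (d + 2) → ℕ) k ^ 2 =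
      (a + ∑ l, t l) ^ 2 + ∑ k, Nsum t k ^ 2 := by
    rw [Fin.sum_univ_succ, Nsum_zero, Fin.sum_cons]
    simp only [Nsum_cons_succ]
  have hprod : (∏ k : Fin (d + 2), if (k : ℕ) < d + 1 then
      invPoch (q ^ 6) (q ^ 6) ((Fin.cons a t : Fin (d + 2) → ℕ) k : ℤ) else 1) =
      invPoch (q ^ 6) (q ^ 6) a *
        ∏ k : Fin (d + 1), if (k : ℕ) < d then invPoch (q ^ 6) (q ^ 6) (t k : ℤ) else 1 := by
    rw [Fin.prod_univ_succ]
    simp [Fin.val_succ]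
  rw [multiSumTerm, multiSumTerm, hsq, hprod, Nsum_zero, Nsum_zero, Fin.sum_cons,
    show Fin.last (d + 1) = (Fin.last d).succ from rfl, Fin.cons_succ]
  push_cast
  rw [add_sub_cancel_right, mul_add, pow_add]
  ring

lemma summable_multiSumTerm (q : ℂ) (M d : ℕ) : Summable (multiSumTerm q M (d := d)) :=
  summable_of_ne_finset_zero fun _ => multiSumTerm_eq_zero_of_notMem

lemma multiSum_zero (q : ℂ) (M : ℕ) :
    multiSum q 0 M = ∑ m ∈ range (M + 1), q ^ (3 * m ^ 2) * qPoch (-q) (q ^ 2) (3 * m) *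
      invPoch (q ^ 6) (q ^ 6) ((M : ℤ) - m) * invPoch (q ^ 6) (q ^ 6) (2 * (m : ℤ)) := by
  rw [multiSum, ← (Equiv.funUnique (Fin 1) ℕ).symm.tsum_eq, tsum_eq_sum (s := range (M + 1))]
  · refine sum_congr rfl fun m _ => ?_
    simp [multiSumTerm, Nsum]
  · intro m hm
    exact multiSumTerm_eq_zero_of_lt (by simpa using hm)

lemma multiSum_succ (q : ℂ) (d M : ℕ) :
    multiSum q (d + 1) M = ∑ m ∈ range (M + 1),
      q ^ (3 * m ^ 2) * invPoch (q ^ 6) (q ^ 6) ((M : ℤ) - m) * multiSum q d m := by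
  obtain ⟨G, hG⟩ : ∃ G : ℕ × (Fin (d + 1) → ℕ) → ℂ, G = fun p =>
      q ^ (3 * p.1 ^ 2) * invPoch (q ^ 6) (q ^ 6) ((M : ℤ) - p.1) * multiSumTerm q p.1 p.2 :=
    ⟨_, rfl⟩
  have hG_of_lt : ∀ p : ℕ × (Fin (d + 1) → ℕ), M < p.1 → G p = 0 := fun p hp => by
    simp only [hG]
    rw [invPoch_of_neg _ _ (by omega)]
    ring
  have hsummable : Summable G := by
    refine summable_of_ne_finset_zero (s := range (M + 1) ×ˢ
      Fintype.piFinset fun _ => range (M + 1)) fun p hp => ?_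
    rcases lt_or_ge M p.1 with hM | hM
    · exact hG_of_lt p hM
    have ht : p.2 ∉ Fintype.piFinset fun _ => range (p.1 + 1) := fun ht =>
      hp (mem_product.2 ⟨mem_range.2 (by omega), Fintype.piFinset_subset _ _
        (fun _ => range_subset_range.2 (by omega)) ht⟩)
    simp only [hG]
    rw [multiSumTerm_eq_zero_of_notMem ht, mul_zero]
  calc multiSum q (d + 1) M
      = ∑' p : ℕ × (Fin (d + 1) → ℕ),
          multiSumTerm q M (Fin.cons p.1 p.2 : Fin (d + 2) → ℕ) :=
        ((Fin.consEquiv fun _ => ℕ).tsum_eq _).symm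
    _ = ∑' p : ℕ × (Fin (d + 1) → ℕ), G (p.1 + ∑ l, p.2 l, p.2) := by
        simp only [multiSumTerm_cons, hG]
    _ = ∑' p, G p := tsum_fst_add_sum_snd fun m t h => by
        simp only [hG]
        rw [multiSumTerm_eq_zero_of_lt h, mul_zero]
    _ = ∑' (m) (t), G (m, t) := hsummable.tsum_prod' fun m => by
        simpa only [hG] using (summable_multiSumTerm q m d).mul_left
          (q ^ (3 * m ^ 2) * invPoch (q ^ 6) (q ^ 6) ((M : ℤ) - m))
    _ = ∑' m : ℕ,
          q ^ (3 * m ^ 2) * invPoch (q ^ 6) (q ^ 6) ((M : ℤ) - m) * multiSum q d m := by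
        simp only [hG, tsum_mul_left, multiSum]
    _ = _ := tsum_eq_sum fun m hm => by
        rw [invPoch_of_neg _ _ (by simp only [mem_range] at hm; omega)]
        ring

end MultiSum

section BaileyChain

variable {q : ℂ}

noncomputable def baileyChain (q : ℂ) (d M : ℕ) : ℂ :=
  qPoch (-q ^ 3) (q ^ 6) M *
    baileyBeta (q ^ 6) (fun j => q ^ (3 * ((d : ℤ) + 2) * j ^ 2 + 2 * j)) M

lemma pow_three_zpow_mul_zpow (hq : q ≠ 0) (j a : ℤ) :
    (q ^ 3) ^ j * q ^ a = q ^ (3 * j + a) := by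
  rw [← zpow_natCast q 3, ← zpow_mul, ← zpow_add₀ hq, Nat.cast_ofNat]

lemma qPoch_mul_invPoch_eq_baileyBeta (hq : q ≠ 0) (hQ : ∀ n, qPoch (q ^ 6) (q ^ 6) n ≠ 0)
    (m : ℕ) :
    qPoch (-q) (q ^ 2) (3 * m) * invPoch (q ^ 6) (q ^ 6) (2 * (m : ℤ)) =
      qPoch (-q ^ 3) (q ^ 6) m * baileyBeta (q ^ 6) (fun j => q ^ (3 * j ^ 2 + 2 * j)) m := by
  have hβ := qPoch_mul_qPoch_div_eq_baileyBeta (s := q ^ 3) (by ring) (pow_ne_zero 3 hq) hQ hq m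
  have hα : (fun k : ℤ => (q ^ 3) ^ (k * (k + 1)) * q ^ (-k)) =
      fun j => q ^ (3 * j ^ 2 + 2 * j) := by
    funext k
    rw [pow_three_zpow_mul_zpow hq]
    ring_nf
  rw [hα, show q ^ 6 / q = q ^ 5 by field_simp] at hβ
  rw [← hβ, qPoch_three_mul, show (q ^ 2) ^ 3 = q ^ 6 by ring, show -q * q ^ 2 = -q ^ 3 by ring,
    show -q * (q ^ 2) ^ 2 = -(q ^ 5) by ring, show 2 * (m : ℤ) = (2 * m : ℕ) by push_cast; ring,
    invPoch_natCast]
  ring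

lemma sum_bailey_step_cube (hq : q ≠ 0) (hQ : ∀ n, qPoch (q ^ 6) (q ^ 6) n ≠ 0) (c : ℤ)
    (M : ℕ) :
    ∑ m ∈ range (M + 1), q ^ (3 * m ^ 2) * qPoch (-q ^ 3) (q ^ 6) m *
        invPoch (q ^ 6) (q ^ 6) ((M : ℤ) - m) *
          baileyBeta (q ^ 6) (fun j => q ^ (c * j ^ 2 + 2 * j)) m =
      qPoch (-q ^ 3) (q ^ 6) M * baileyBeta (q ^ 6) (fun j => q ^ ((c + 3) * j ^ 2 + 2 * j)) M := by
  simp only [pow_mul]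
  rw [sum_bailey_step (by ring) hQ]
  congr 2
  funext j
  rw [pow_three_zpow_mul_zpow hq]
  ring_nf

lemma sum_qPoch_mul_invPoch_eq_baileyChain (hq : q ≠ 0)
    (hQ : ∀ n, qPoch (q ^ 6) (q ^ 6) n ≠ 0) (M : ℕ) :
    ∑ m ∈ range (M + 1), q ^ (3 * m ^ 2) * qPoch (-q) (q ^ 2) (3 * m) *
      invPoch (q ^ 6) (q ^ 6) ((M : ℤ) - m) * invPoch (q ^ 6) (q ^ 6) (2 * (m : ℤ)) =
      baileyChain q 0 M := by
  calc _ = ∑ m ∈ range (M + 1), q ^ (3 * m ^ 2) * qPoch (-q ^ 3) (q ^ 6) m *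
        invPoch (q ^ 6) (q ^ 6) ((M : ℤ) - m) *
          baileyBeta (q ^ 6) (fun j => q ^ (3 * j ^ 2 + 2 * j)) m :=
        sum_congr rfl fun m _ => by
          linear_combination q ^ (3 * m ^ 2) * invPoch (q ^ 6) (q ^ 6) ((M : ℤ) - m) *
            qPoch_mul_invPoch_eq_baileyBeta hq hQ m
    _ = _ := by
        rw [sum_bailey_step_cube hq hQ, baileyChain]
        norm_num

lemma sum_baileyChain (hq : q ≠ 0) (hQ : ∀ n, qPoch (q ^ 6) (q ^ 6) n ≠ 0) (d M : ℕ) :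
    ∑ m ∈ range (M + 1), q ^ (3 * m ^ 2) * invPoch (q ^ 6) (q ^ 6) ((M : ℤ) - m) *
      baileyChain q d m = baileyChain q (d + 1) M := by
  calc _ = ∑ m ∈ range (M + 1), q ^ (3 * m ^ 2) * qPoch (-q ^ 3) (q ^ 6) m *
        invPoch (q ^ 6) (q ^ 6) ((M : ℤ) - m) *
          baileyBeta (q ^ 6) (fun j => q ^ (3 * ((d : ℤ) + 2) * j ^ 2 + 2 * j)) m :=
        sum_congr rfl fun m _ => by
          rw [baileyChain]
          ring
    _ = _ := by
        rw [sum_bailey_step_cube hq hQ, baileyChain]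
        push_cast
        ring_nf

theorem multiSum_eq_baileyChain (hq : q ≠ 0) (hQ : ∀ n, qPoch (q ^ 6) (q ^ 6) n ≠ 0)
    (d : ℕ) :
    ∀ M, multiSum q d M = baileyChain q d M := by
  induction d with
  | zero => exact fun M => by rw [multiSum_zero, sum_qPoch_mul_invPoch_eq_baileyChain hq hQ]
  | succ d ih =>
    intro M
    rw [multiSum_succ, sum_congr rfl fun m _ => by rw [ih m], sum_baileyChain hq hQ]

end BaileyChain

theorem statement_8 (ν : ℕ) (hν : 0 < ν) (M : ℕ) (q : ℂ) (h0 : 0 < ‖q‖)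
    (h1 : ‖q‖ < 1) :
    (∑' n : Fin ν → ℕ,
      q ^ (3 * ∑ k : Fin ν, (Nsum n k) ^ 2) * qPoch (-q) (q ^ 2) (3 * n ⟨ν - 1, by omega⟩) *
        invPoch (q ^ 6) (q ^ 6) ((M : ℤ) - (Nsum n ⟨0, by omega⟩ : ℤ)) *
        (∏ k : Fin ν, if (k : ℕ) < ν - 1 then invPoch (q ^ 6) (q ^ 6) (n k : ℤ) else 1) *
        invPoch (q ^ 6) (q ^ 6) (2 * (n ⟨ν - 1, by omega⟩ : ℤ)))
    = qPoch (-q ^ 3) (q ^ 6) M / qPoch (q ^ 6) (q ^ 6) (2 * M) *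
        ∑ j ∈ Finset.Icc (-(M : ℤ)) (M : ℤ),
          q ^ (3 * ((ν : ℤ) + 1) * j ^ 2 + 2 * j) * qBinom (q ^ 6) (2 * (M : ℤ)) ((M : ℤ) + j) := by
  obtain ⟨d, rfl⟩ : ∃ d, ν = d + 1 := ⟨ν - 1, by omega⟩
  have hq : q ≠ 0 := norm_pos_iff.1 h0
  have hq6 : ‖q ^ 6‖ < 1 := by
    rw [norm_pow]
    exact pow_lt_one₀ (norm_nonneg q) h1 (by norm_num)
  have hQ := qPoch_ne_zero_of_norm_lt_one hq6 hq6.le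
  calc _ = multiSum q d M := rfl
    _ = baileyChain q d M := multiSum_eq_baileyChain hq hQ d M
    _ = _ := by
        rw [show ((d + 1 : ℕ) : ℤ) + 1 = (d : ℤ) + 2 by push_cast; ring, baileyChain,
          baileyBeta_eq_sum_qBinom hQ, div_eq_mul_inv, mul_assoc]
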